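/- arXiv:1401.2122 — 5 statements merged into one kernel-verified Lean document; each statement's English description precedes it below -/
import Mathlib

section
/- The map h ↦ X_h from functions to contact vector fields is a Lie algebra homomorphism: for all twice continuously differentiable functions h₁, h₂ : ℝ³ → ℝ and every twice continuously differentiable function φ : ℝ³ → ℝ in the variables (x, z, p), one has X_{{h₁,h₂}_L}(φ) = X_{h₁}(X_{h₂}(φ)) − X_{h₂}(X_{h₁}(φ)) at every point of ℝ³. -/
/-- Partial derivative of `h : ℝ³ → ℝ` in the `i`-th coordinate.
Coordinates: `0 ↦ x`, `1 ↦ z`, `2 ↦ p`. -/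
noncomputable def pd3 (i : Fin 3) (h : (Fin 3 → ℝ) → ℝ) (q : Fin 3 → ℝ) : ℝ :=
  fderiv ℝ h q (Pi.single i 1)

/-- The contact (Lagrange) bracket in the variables `(x, z, p) = (q 0, q 1, q 2)`:
`{h₁,h₂}_L = h₁ₚ h₂ₓ − h₂ₚ h₁ₓ − p (h₁ₚ h₂_z − h₂ₚ h₁_z) + h₁ h₂_z − h₂ h₁_z`. -/
noncomputable def cbr3 (h₁ h₂ : (Fin 3 → ℝ) → ℝ) (q : Fin 3 → ℝ) : ℝ :=
  pd3 2 h₁ q * pd3 0 h₂ q - pd3 2 h₂ q * pd3 0 h₁ q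
    - q 2 * (pd3 2 h₁ q * pd3 1 h₂ q - pd3 2 h₂ q * pd3 1 h₁ q)
    + h₁ q * pd3 1 h₂ q - h₂ q * pd3 1 h₁ q

/-- Action of the contact vector field `X_h` on a function `φ`:
`X_h(φ) = hₚ φₓ + (p h_z − hₓ) φₚ + (h − p hₚ) φ_z`, in coordinates `(x,z,p) = (q 0, q 1, q 2)`. -/
noncomputable def X3 (h φ : (Fin 3 → ℝ) → ℝ) (q : Fin 3 → ℝ) : ℝ :=
  pd3 2 h q * pd3 0 φ q + (q 2 * pd3 1 h q - pd3 0 h q) * pd3 2 φ q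
    + (h q - q 2 * pd3 2 h q) * pd3 1 φ q

/-!
Writing `X3 h φ q = dφ_q (V_h q)` for the vector field `V_h = contactField h`, the commutator
`X_{h₁} ∘ X_{h₂} − X_{h₂} ∘ X_{h₁}` acting on a `C²` function is differentiation along the Lie
bracket `[V_{h₁}, V_{h₂}]` (the second derivatives of `φ` cancel by symmetry). The theorem thus
reduces to the identity of vector fields `[V_{h₁}, V_{h₂}] = V_{{h₁,h₂}_L}`, which is checked
componentwise using the symmetry of the second derivatives of `h₁` and `h₂`.
-/

open VectorField

section PartialDerivatives

variable {f g : (Fin 3 → ℝ) → ℝ} {q : Fin 3 → ℝ}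

lemma fderiv_apply_eq_pd3 (v : Fin 3 → ℝ) :
    fderiv ℝ f q v = v 0 * pd3 0 f q + v 1 * pd3 1 f q + v 2 * pd3 2 f q := by
  conv_lhs => rw [pi_eq_sum_univ' v]
  simp [Fin.sum_univ_three, pd3]

lemma pd3_fun_add (i : Fin 3) (hf : DifferentiableAt ℝ f q) (hg : DifferentiableAt ℝ g q) :
    pd3 i (fun x => f x + g x) q = pd3 i f q + pd3 i g q := by
  simp [pd3, fderiv_fun_add hf hg]

lemma pd3_fun_sub (i : Fin 3) (hf : DifferentiableAt ℝ f q) (hg : DifferentiableAt ℝ g q) :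
    pd3 i (fun x => f x - g x) q = pd3 i f q - pd3 i g q := by
  simp [pd3, fderiv_fun_sub hf hg]

lemma pd3_fun_mul (i : Fin 3) (hf : DifferentiableAt ℝ f q) (hg : DifferentiableAt ℝ g q) :
    pd3 i (fun x => f x * g x) q = pd3 i f q * g q + f q * pd3 i g q := by
  simp [pd3, fderiv_fun_mul hf hg]
  ring

lemma pd3_coord (i j : Fin 3) : pd3 i (fun x => x j) q = (Pi.single i 1 : Fin 3 → ℝ) j :=
  congrArg (· (Pi.single i 1)) (ContinuousLinearMap.proj j : (Fin 3 → ℝ) →L[ℝ] ℝ).fderiv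

lemma ContDiff.pd3 {n : WithTop ℕ∞} (hf : ContDiff ℝ (n + 1) f) (i : Fin 3) :
    ContDiff ℝ n (pd3 i f) :=
  (ContinuousLinearMap.apply ℝ ℝ (Pi.single i 1 : Fin 3 → ℝ)).contDiff.comp
    (hf.fderiv_right le_rfl)

lemma pd3_comm (hf : ContDiff ℝ 2 f) (i j : Fin 3) :
    pd3 i (pd3 j f) q = pd3 j (pd3 i f) q := by
  have hd2 : DifferentiableAt ℝ (fderiv ℝ f) q :=
    (hf.fderiv_right (m := 1) le_rfl).differentiable one_ne_zero q
  have hsnd (k l : Fin 3) :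
      pd3 k (pd3 l f) q = fderiv ℝ (fderiv ℝ f) q (Pi.single k 1) (Pi.single l 1) := by
    change fderiv ℝ (fun x => fderiv ℝ f x (Pi.single l 1)) q (Pi.single k 1) = _
    rw [fderiv_clm_apply hd2 (differentiableAt_const _)]
    simp
  rw [hsnd, hsnd, (hf.contDiffAt.isSymmSndFDerivAt (by simp)) _ _]

end PartialDerivatives

noncomputable def contactField (h : (Fin 3 → ℝ) → ℝ) (q : Fin 3 → ℝ) : Fin 3 → ℝ :=
  ![pd3 2 h q, h q - q 2 * pd3 2 h q, q 2 * pd3 1 h q - pd3 0 h q]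

lemma X3_eq_fderiv_contactField (h φ : (Fin 3 → ℝ) → ℝ) (q : Fin 3 → ℝ) :
    X3 h φ q = fderiv ℝ φ q (contactField h q) := by
  rw [fderiv_apply_eq_pd3]
  simp [X3, contactField]
  ring

lemma ContDiff.contactField {n : WithTop ℕ∞} {h : (Fin 3 → ℝ) → ℝ} (hh : ContDiff ℝ (n + 1) h) :
    ContDiff ℝ n (contactField h) := by
  have hp := hh.pd3
  have h0 : ContDiff ℝ n h := hh.of_le le_self_add
  refine contDiff_pi' fun j => ?_
  fin_cases j <;> simp [_root_.contactField] <;> fun_prop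

lemma ContDiff.differentiable_contactField {h : (Fin 3 → ℝ) → ℝ} (hh : ContDiff ℝ 2 h) :
    Differentiable ℝ (_root_.contactField h) :=
  (hh.contactField (n := 1)).differentiable one_ne_zero

lemma lieBracket_apply_eq_fderiv_sub {ι : Type*} [Fintype ι] {V W : (ι → ℝ) → ι → ℝ}
    {q : ι → ℝ} (hV : DifferentiableAt ℝ V q) (hW : DifferentiableAt ℝ W q) (j : ι) :
    lieBracket ℝ V W q j =
      fderiv ℝ (fun x => W x j) q (V q) - fderiv ℝ (fun x => V x j) q (W q) := by
  simp [lieBracket_eq, fderiv_apply hV, fderiv_apply hW]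

lemma lieBracket_contactField {h₁ h₂ : (Fin 3 → ℝ) → ℝ} (hh₁ : ContDiff ℝ 2 h₁)
    (hh₂ : ContDiff ℝ 2 h₂) (q : Fin 3 → ℝ) :
    lieBracket ℝ (contactField h₁) (contactField h₂) q = contactField (cbr3 h₁ h₂) q := by
  have d₁ : Differentiable ℝ h₁ := hh₁.differentiable (by norm_num)
  have d₂ : Differentiable ℝ h₂ := hh₂.differentiable (by norm_num)
  have dp₁ (j : Fin 3) : Differentiable ℝ (pd3 j h₁) :=
    (hh₁.pd3 (n := 1) j).differentiable one_ne_zero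
  have dp₂ (j : Fin 3) : Differentiable ℝ (pd3 j h₂) :=
    (hh₂.pd3 (n := 1) j).differentiable one_ne_zero
  ext j
  rw [lieBracket_apply_eq_fderiv_sub (hh₁.differentiable_contactField q)
    (hh₂.differentiable_contactField q), ← X3_eq_fderiv_contactField,
    ← X3_eq_fderiv_contactField]
  unfold cbr3
  fin_cases j <;>
    simp (disch := fun_prop) [X3, contactField, pd3_fun_add, pd3_fun_sub, pd3_fun_mul, pd3_coord,
      Pi.single_apply]
  all_goals
    simp only [pd3_comm hh₁ 1 0, pd3_comm hh₁ 2 0, pd3_comm hh₁ 2 1,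
      pd3_comm hh₂ 1 0, pd3_comm hh₂ 2 0, pd3_comm hh₂ 2 1]
    ring

/-- The map `h ↦ X_h` is a Lie algebra homomorphism: for all twice continuously
differentiable `h₁ h₂ : ℝ³ → ℝ` and every twice continuously differentiable `φ : ℝ³ → ℝ`
in the variables `(x, z, p)`, one has
`X_{{h₁,h₂}_L}(φ) = X_{h₁}(X_{h₂}(φ)) − X_{h₂}(X_{h₁}(φ))` at every point of ℝ³. -/
theorem contact_field_lie_algebra_hom (h₁ h₂ φ : (Fin 3 → ℝ) → ℝ)
    (hh₁ : ContDiff ℝ 2 h₁) (hh₂ : ContDiff ℝ 2 h₂) (hφ : ContDiff ℝ 2 φ)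
    (q : Fin 3 → ℝ) :
    X3 (cbr3 h₁ h₂) φ q = X3 h₁ (X3 h₂ φ) q - X3 h₂ (X3 h₁ φ) q := by
  have hX : ∀ h ψ, X3 h ψ = fun x => fderiv ℝ ψ x (contactField h x) :=
    fun h ψ => funext (X3_eq_fderiv_contactField h ψ)
  simp only [hX, ← lieBracket_contactField hh₁ hh₂]
  exact fderiv_apply_lieBracket hφ.contDiffAt (by simp)
    (hh₂.differentiable_contactField q) (hh₁.differentiable_contactField q)
end

section
/- Compatibility of a contact Lax pair implies the zero-curvature-type equation along the solution: let f, g : ℝ⁵ → ℝ be smooth functions of (x, y, z, t, p), and let ψ : ℝ⁴ → ℝ be a twice continuously differentiable function of (x, y, z, t) with ∂_z ψ nowhere vanishing, satisfying ∂_y ψ = ∂_z ψ · f(x, y, z, t, ∂_x ψ/∂_z ψ) and ∂_t ψ = ∂_z ψ · g(x, y, z, t, ∂_x ψ/∂_z ψ) at every point. Then (∂_t f − ∂_y g + {f, g}_L)(x, y, z, t, ∂_x ψ(x,y,z,t)/∂_z ψ(x,y,z,t)) = 0 for all (x, y, z, t) ∈ ℝ⁴, where the contact bracket of f and g is taken in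 the variables (x, z, p) with (y, t) as parameters. -/
/-- Partial derivative of a function on ℝ⁵ in the `i`-th coordinate.
Coordinates: `0 ↦ x`, `1 ↦ y`, `2 ↦ z`, `3 ↦ t`, `4 ↦ p`. -/
noncomputable def pd5 (i : Fin 5) (h : (Fin 5 → ℝ) → ℝ) (r : Fin 5 → ℝ) : ℝ :=
  fderiv ℝ h r (Pi.single i 1)

/-- Partial derivative of a function on ℝ⁴ in the `i`-th coordinate.
Coordinates: `0 ↦ x`, `1 ↦ y`, `2 ↦ z`, `3 ↦ t`. -/
noncomputable def pd4 (i : Fin 4) (h : (Fin 4 → ℝ) → ℝ) (w : Fin 4 → ℝ) : ℝ :=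
  fderiv ℝ h w (Pi.single i 1)

/-- The contact (Lagrange) bracket in the variables `(x, z, p) = (r 0, r 2, r 4)`,
with `(y, t) = (r 1, r 3)` as parameters. -/
noncomputable def cbr5 (h₁ h₂ : (Fin 5 → ℝ) → ℝ) (r : Fin 5 → ℝ) : ℝ :=
  pd5 4 h₁ r * pd5 0 h₂ r - pd5 4 h₂ r * pd5 0 h₁ r
    - r 4 * (pd5 4 h₁ r * pd5 2 h₂ r - pd5 4 h₂ r * pd5 2 h₁ r)
    + h₁ r * pd5 2 h₂ r - h₂ r * pd5 2 h₁ r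

/-- Action of the contact vector field `X_h` in the variables `(x, z, p) = (r 0, r 2, r 4)`,
pointwise in the parameters `(y, t) = (r 1, r 3)`:
`X_h(φ) = hₚ φₓ + (p h_z − hₓ) φₚ + (h − p hₚ) φ_z`. -/
noncomputable def X5 (h φ : (Fin 5 → ℝ) → ℝ) (r : Fin 5 → ℝ) : ℝ :=
  pd5 4 h r * pd5 0 φ r + (r 4 * pd5 2 h r - pd5 0 h r) * pd5 4 φ r
    + (h r - r 4 * pd5 4 h r) * pd5 2 φ r

/-- Projection `(x,y,z,t,p) ↦ (x,y,z,t)`. -/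
def proj45 (r : Fin 5 → ℝ) : Fin 4 → ℝ := fun i => r i.castSucc

/-! ### Auxiliary lemmas -/

lemma pd4_pd4 {ψ : (Fin 4 → ℝ) → ℝ} (hψ : ContDiff ℝ 2 ψ) (i j : Fin 4) (w : Fin 4 → ℝ) :
    pd4 i (pd4 j ψ) w = fderiv ℝ (fderiv ℝ ψ) w (Pi.single i 1) (Pi.single j 1) := by
  have hd : DifferentiableAt ℝ (fderiv ℝ ψ) w :=
    ((hψ.fderiv_right (m := 1) (by norm_num)).differentiable one_ne_zero) w
  have h1 := hd.hasFDerivAt.clm_apply (hasFDerivAt_const (Pi.single j 1 : Fin 4 → ℝ) w)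
  rw [pd4, show pd4 j ψ = fun y => (fderiv ℝ ψ y) (Pi.single j 1) from rfl, h1.fderiv]
  simp

lemma pd4_symm {ψ : (Fin 4 → ℝ) → ℝ} (hψ : ContDiff ℝ 2 ψ) (i j : Fin 4) (w : Fin 4 → ℝ) :
    pd4 i (pd4 j ψ) w = pd4 j (pd4 i ψ) w := by
  rw [pd4_pd4 hψ i j w, pd4_pd4 hψ j i w]
  exact (hψ.contDiffAt.isSymmSndFDerivAt (by norm_num)) _ _

lemma pd4_diff {ψ : (Fin 4 → ℝ) → ℝ} (hψ : ContDiff ℝ 2 ψ) (i : Fin 4) :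
    Differentiable ℝ (pd4 i ψ) := by
  have : ContDiff ℝ 1 fun w => (fderiv ℝ ψ w) (Pi.single i 1) :=
    (hψ.fderiv_right (by norm_num)).clm_apply contDiff_const
  exact this.differentiable one_ne_zero

lemma clm_expand (L : (Fin 5 → ℝ) →L[ℝ] ℝ) (v : Fin 5 → ℝ) :
    L v = v 0 * L (Pi.single 0 1) + v 1 * L (Pi.single 1 1) + v 2 * L (Pi.single 2 1)
      + v 3 * L (Pi.single 3 1) + v 4 * L (Pi.single 4 1) := by
  have hv : v = v 0 • (Pi.single 0 1 : Fin 5 → ℝ) + v 1 • (Pi.single 1 1 : Fin 5 → ℝ)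
      + v 2 • (Pi.single 2 1 : Fin 5 → ℝ) + v 3 • (Pi.single 3 1 : Fin 5 → ℝ)
      + v 4 • (Pi.single 4 1 : Fin 5 → ℝ) := by
    funext j; fin_cases j <;> simp [Pi.single_apply]
  conv_lhs => rw [hv]
  simp [smul_eq_mul]

/-- The map `(x,y,z,t) ↦ (x,y,z,t, ψ_x/ψ_z)`. -/
noncomputable def Emb (ψ : (Fin 4 → ℝ) → ℝ) (w : Fin 4 → ℝ) : Fin 5 → ℝ :=
  ![w 0, w 1, w 2, w 3, pd4 0 ψ w / pd4 2 ψ w]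

lemma P_diff {ψ : (Fin 4 → ℝ) → ℝ} (hψ : ContDiff ℝ 2 ψ)
    (hψz : ∀ w : Fin 4 → ℝ, pd4 2 ψ w ≠ 0) :
    Differentiable ℝ (fun w => pd4 0 ψ w / pd4 2 ψ w) := by
  simp only [div_eq_mul_inv]
  exact fun w => ((pd4_diff hψ 0) w).mul (((pd4_diff hψ 2) w).inv (hψz w))

lemma emb_hasFDeriv (ψ : (Fin 4 → ℝ) → ℝ) (w : Fin 4 → ℝ)
    (hP : DifferentiableAt ℝ (fun w => pd4 0 ψ w / pd4 2 ψ w) w) :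
    HasFDerivAt (Emb ψ)
      (ContinuousLinearMap.pi
        ![ContinuousLinearMap.proj 0, ContinuousLinearMap.proj 1, ContinuousLinearMap.proj 2,
          ContinuousLinearMap.proj 3, fderiv ℝ (fun w => pd4 0 ψ w / pd4 2 ψ w) w]) w := by
  have : Emb ψ = fun w (j : Fin 5) =>
      (![fun w => w 0, fun w => w 1, fun w => w 2, fun w => w 3,
        fun w => pd4 0 ψ w / pd4 2 ψ w] : Fin 5 → (Fin 4 → ℝ) → ℝ) j w := by
    funext w j; fin_cases j <;> rfl
  rw [this]
  apply hasFDerivAt_pi.2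
  intro j
  fin_cases j
  · exact hasFDerivAt_apply 0 w
  · exact hasFDerivAt_apply 1 w
  · exact hasFDerivAt_apply 2 w
  · exact hasFDerivAt_apply 3 w
  · exact hP.hasFDerivAt

lemma comp_pd (ψ : (Fin 4 → ℝ) → ℝ) (h : (Fin 5 → ℝ) → ℝ) (w : Fin 4 → ℝ)
    (hh : DifferentiableAt ℝ h (Emb ψ w))
    (hP : DifferentiableAt ℝ (fun w => pd4 0 ψ w / pd4 2 ψ w) w) (i : Fin 4) :
    pd4 i (fun w => h (Emb ψ w)) w
      = pd5 i.castSucc h (Emb ψ w)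
        + pd4 i (fun w => pd4 0 ψ w / pd4 2 ψ w) w * pd5 4 h (Emb ψ w) := by
  have hE := emb_hasFDeriv ψ w hP
  have hc := (hh.hasFDerivAt.comp w hE)
  rw [pd4, show (fun w => h (Emb ψ w)) = h ∘ Emb ψ from rfl, hc.fderiv]
  rw [ContinuousLinearMap.comp_apply, clm_expand]
  simp only [ContinuousLinearMap.pi_apply, pd5, pd4]
  fin_cases i <;>
    simp [Pi.single_apply, show (Fin.castSucc 0 : Fin 5) = 0 from rfl,
      show (Fin.castSucc 1 : Fin 5) = 1 from rfl, show (Fin.castSucc 2 : Fin 5) = 2 from rfl,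
      show (Fin.castSucc 3 : Fin 5) = 3 from rfl]

lemma prod_pd {ψ : (Fin 4 → ℝ) → ℝ} (hψ : ContDiff ℝ 2 ψ)
    (hψz : ∀ w : Fin 4 → ℝ, pd4 2 ψ w ≠ 0)
    (h : (Fin 5 → ℝ) → ℝ) (hh : Differentiable ℝ h) (i : Fin 4) (w : Fin 4 → ℝ) :
    pd4 i (fun w => pd4 2 ψ w * h (Emb ψ w)) w
      = pd4 i (pd4 2 ψ) w * h (Emb ψ w)
        + pd4 2 ψ w * (pd5 i.castSucc h (Emb ψ w)
            + pd4 i (fun w => pd4 0 ψ w / pd4 2 ψ w) w * pd5 4 h (Emb ψ w)) := by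
  have hPd : DifferentiableAt ℝ (fun w => pd4 0 ψ w / pd4 2 ψ w) w := P_diff hψ hψz w
  have hcd : DifferentiableAt ℝ (fun w => h (Emb ψ w)) w :=
    (hh _).comp w (emb_hasFDeriv ψ w hPd).differentiableAt
  rw [pd4, fderiv_fun_mul ((pd4_diff hψ 2) w) hcd]
  simp only [ContinuousLinearMap.add_apply, ContinuousLinearMap.smul_apply, smul_eq_mul]
  rw [show fderiv ℝ (fun w => h (Emb ψ w)) w (Pi.single i 1)
      = pd4 i (fun w => h (Emb ψ w)) w from rfl,
    comp_pd ψ h w (hh _) hPd i,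
    show fderiv ℝ (pd4 2 ψ) w (Pi.single i 1) = pd4 i (pd4 2 ψ) w from rfl]
  ring

lemma pdP {ψ : (Fin 4 → ℝ) → ℝ} (hψ : ContDiff ℝ 2 ψ)
    (hψz : ∀ w : Fin 4 → ℝ, pd4 2 ψ w ≠ 0) (i : Fin 4) (w : Fin 4 → ℝ) :
    pd4 i (fun w => pd4 0 ψ w / pd4 2 ψ w) w
      = (pd4 i (pd4 0 ψ) w - (pd4 0 ψ w / pd4 2 ψ w) * pd4 i (pd4 2 ψ) w) / pd4 2 ψ w := by
  have hid : pd4 0 ψ = fun w => (pd4 0 ψ w / pd4 2 ψ w) * pd4 2 ψ w := by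
    funext w; rw [div_mul_cancel₀ _ (hψz w)]
  have hm : pd4 i (pd4 0 ψ) w
      = (pd4 0 ψ w / pd4 2 ψ w) * pd4 i (pd4 2 ψ) w
        + pd4 2 ψ w * pd4 i (fun w => pd4 0 ψ w / pd4 2 ψ w) w := by
    conv_lhs => rw [hid]
    rw [pd4, fderiv_fun_mul (P_diff hψ hψz w) ((pd4_diff hψ 2) w)]
    simp only [ContinuousLinearMap.add_apply, ContinuousLinearMap.smul_apply, smul_eq_mul]
    rw [show fderiv ℝ (fun w => pd4 0 ψ w / pd4 2 ψ w) w (Pi.single i 1)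
        = pd4 i (fun w => pd4 0 ψ w / pd4 2 ψ w) w from rfl,
      show fderiv ℝ (pd4 2 ψ) w (Pi.single i 1) = pd4 i (pd4 2 ψ) w from rfl]
  rw [eq_div_iff (hψz w)]
  linear_combination -hm

lemma algebra_key (A pp u02 u22 P0 P1 P2 P3 F G Fx Fz Ft Fp Gx Gy Gz Gp E10 E12 E30 E32 : ℝ)
    (hA : A ≠ 0)
    (hP2 : P2 = (u02 - pp * u22) / A)
    (hE10 : E10 = u02 * F + A * (Fx + P0 * Fp))
    (hE12 : E12 = u22 * F + A * (Fz + P2 * Fp))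
    (hE30 : E30 = u02 * G + A * (Gx + P0 * Gp))
    (hE32 : E32 = u22 * G + A * (Gz + P2 * Gp))
    (hP1 : P1 = (E10 - pp * E12) / A)
    (hP3 : P3 = (E30 - pp * E32) / A)
    (hMain : E32 * F + A * (Ft + P3 * Fp) = E12 * G + A * (Gy + P1 * Gp)) :
    Ft - Gy + (Fp * Gx - Gp * Fx - pp * (Fp * Gz - Gp * Fz) + F * Gz - G * Fz) = 0 := by
  subst hP2 hE10 hE12 hE30 hE32 hP1 hP3
  have h2 : A * (Ft - Gy
      + (Fp * Gx - Gp * Fx - pp * (Fp * Gz - Gp * Fz) + F * Gz - G * Fz)) = 0 := by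
    field_simp at hMain
    linear_combination hMain
  exact (mul_eq_zero.mp h2).resolve_left hA

theorem contact_lax_implies_zero_curvature (f g : (Fin 5 → ℝ) → ℝ)
    (hf : ContDiff ℝ (⊤ : ℕ∞) f) (hg : ContDiff ℝ (⊤ : ℕ∞) g)
    (ψ : (Fin 4 → ℝ) → ℝ) (hψ : ContDiff ℝ 2 ψ)
    (hψz : ∀ w : Fin 4 → ℝ, pd4 2 ψ w ≠ 0)
    (hy : ∀ w : Fin 4 → ℝ,
      pd4 1 ψ w = pd4 2 ψ w * f ![w 0, w 1, w 2, w 3, pd4 0 ψ w / pd4 2 ψ w])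
    (ht : ∀ w : Fin 4 → ℝ,
      pd4 3 ψ w = pd4 2 ψ w * g ![w 0, w 1, w 2, w 3, pd4 0 ψ w / pd4 2 ψ w]) :
    ∀ w : Fin 4 → ℝ,
      pd5 3 f ![w 0, w 1, w 2, w 3, pd4 0 ψ w / pd4 2 ψ w]
        - pd5 1 g ![w 0, w 1, w 2, w 3, pd4 0 ψ w / pd4 2 ψ w]
        + cbr5 f g ![w 0, w 1, w 2, w 3, pd4 0 ψ w / pd4 2 ψ w] = 0 := by
  intro w
  have hfd : Differentiable ℝ f := hf.differentiable (by simp)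
  have hgd : Differentiable ℝ g := hg.differentiable (by simp)
  have hy' : pd4 1 ψ = fun w => pd4 2 ψ w * f (Emb ψ w) := funext fun w => hy w
  have ht' : pd4 3 ψ = fun w => pd4 2 ψ w * g (Emb ψ w) := funext fun w => ht w
  have cs0 : (Fin.castSucc 0 : Fin 5) = 0 := rfl
  have cs1 : (Fin.castSucc 1 : Fin 5) = 1 := rfl
  have cs2 : (Fin.castSucc 2 : Fin 5) = 2 := rfl
  have cs3 : (Fin.castSucc 3 : Fin 5) = 3 := rfl
  have main : pd4 3 (pd4 1 ψ) w = pd4 1 (pd4 3 ψ) w := pd4_symm hψ 3 1 w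
  rw [hy', ht', prod_pd hψ hψz f hfd 3 w, prod_pd hψ hψz g hgd 1 w, cs3, cs1] at main
  have E10 : pd4 1 (pd4 0 ψ) w = pd4 0 (pd4 1 ψ) w := pd4_symm hψ 1 0 w
  rw [hy', prod_pd hψ hψz f hfd 0 w, cs0] at E10
  have E12 : pd4 1 (pd4 2 ψ) w = pd4 2 (pd4 1 ψ) w := pd4_symm hψ 1 2 w
  rw [hy', prod_pd hψ hψz f hfd 2 w, cs2] at E12
  have E30 : pd4 3 (pd4 0 ψ) w = pd4 0 (pd4 3 ψ) w := pd4_symm hψ 3 0 w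
  rw [ht', prod_pd hψ hψz g hgd 0 w, cs0] at E30
  have E32 : pd4 3 (pd4 2 ψ) w = pd4 2 (pd4 3 ψ) w := pd4_symm hψ 3 2 w
  rw [ht', prod_pd hψ hψz g hgd 2 w, cs2] at E32
  have hP2 := pdP hψ hψz 2 w
  rw [pd4_symm hψ 2 0 w] at hP2
  have hP1 := pdP hψ hψz 1 w
  have hP3 := pdP hψ hψz 3 w
  have h4 : Emb ψ w 4 = pd4 0 ψ w / pd4 2 ψ w := rfl
  show pd5 3 f (Emb ψ w) - pd5 1 g (Emb ψ w) + cbr5 f g (Emb ψ w) = 0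
  rw [cbr5, h4]
  exact algebra_key (pd4 2 ψ w) (pd4 0 ψ w / pd4 2 ψ w)
    (pd4 0 (pd4 2 ψ) w) (pd4 2 (pd4 2 ψ) w)
    (pd4 0 (fun w => pd4 0 ψ w / pd4 2 ψ w) w)
    (pd4 1 (fun w => pd4 0 ψ w / pd4 2 ψ w) w)
    (pd4 2 (fun w => pd4 0 ψ w / pd4 2 ψ w) w)
    (pd4 3 (fun w => pd4 0 ψ w / pd4 2 ψ w) w)
    (f (Emb ψ w)) (g (Emb ψ w))
    (pd5 0 f (Emb ψ w)) (pd5 2 f (Emb ψ w)) (pd5 3 f (Emb ψ w)) (pd5 4 f (Emb ψ w))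
    (pd5 0 g (Emb ψ w)) (pd5 1 g (Emb ψ w)) (pd5 2 g (Emb ψ w)) (pd5 4 g (Emb ψ w))
    (pd4 1 (pd4 0 ψ) w) (pd4 1 (pd4 2 ψ) w) (pd4 3 (pd4 0 ψ) w) (pd4 3 (pd4 2 ψ) w)
    (hψz w) hP2 E10 E12 E30 E32 hP1 hP3 main
end

section
/- Example 1 (zero-curvature equation for the four-component system): let u, v, w, q : ℝ⁴ → ℝ be continuously differentiable functions of (x, y, z, t), and define f(x,y,z,t,p) = p² + w·p + u and g(x,y,z,t,p) = p³ + 2w·p² + q·p + v. Then ∂_t f − ∂_y g + {f, g}_L = 0 holds for all (x, y, z, t, p) ∈ ℝ⁵ (bracket in the variables (x, z, p)) if and only if at every (x, y, z, t) the following four equations hold: (i) u_t − v·u_z − q·u_x + u·v_z + w·v_x − v_y = 0; (ii) 2u_z + w_x + 2w·w_z − q_z = 0; (iii) 2q_x − 3u_x − 2w_y + 2w·u_z − v_z − 2w·w_x + 2u·w_z = 0; (iv) w_t − q_y + 2v_x − 4w·u_x + w·q_x − q·w_x − v·w_z + u·q_z = 0. -/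
open Polynomial in
lemma forall_sum_mul_pow_eq_zero_iff {R : Type*} [CommRing R] [IsDomain R] [Infinite R] {n : ℕ}
    (c : Fin n → R) : (∀ x : R, ∑ k, c k * x ^ (k : ℕ) = 0) ↔ c = 0 := by
  refine ⟨fun h => ?_, fun h x => by simp [h]⟩
  have hP : ∑ k, C (c k) * X ^ (k : ℕ) = 0 :=
    Polynomial.funext fun x => by simpa [eval_finsetSum] using h x
  ext j
  simpa [finsetSum_coeff, coeff_C_mul_X_pow, Fin.val_inj] using congrArg (coeff · j) hP

section PartialDerivative

variable {F G : (Fin 5 → ℝ) → ℝ} {r : Fin 5 → ℝ} (i : Fin 5)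

lemma pd5_add (hF : DifferentiableAt ℝ F r) (hG : DifferentiableAt ℝ G r) :
    pd5 i (fun r => F r + G r) r = pd5 i F r + pd5 i G r := by
  simp [pd5, fderiv_fun_add hF hG]

lemma pd5_mul (hF : DifferentiableAt ℝ F r) (hG : DifferentiableAt ℝ G r) :
    pd5 i (fun r => F r * G r) r = F r * pd5 i G r + G r * pd5 i F r := by
  simp [pd5, fderiv_fun_mul hF hG]

lemma pd5_const (c : ℝ) : pd5 i (fun _ => c) r = 0 := by
  simp [pd5]

lemma pd5_pow (hF : DifferentiableAt ℝ F r) (n : ℕ) :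
    pd5 i (fun r => F r ^ n) r = n * F r ^ (n - 1) * pd5 i F r := by
  simp [pd5, fderiv_fun_pow n hF]

end PartialDerivative

lemma pd5_castSucc_last_coord (i : Fin 4) (r : Fin 5 → ℝ) :
    pd5 i.castSucc (fun r => r 4) r = 0 := by
  simpa [pd5, fderiv_apply, Pi.single_apply] using (Fin.castSucc_lt_last i).ne'

lemma pd5_last_coord (r : Fin 5 → ℝ) : pd5 4 (fun r => r 4) r = 1 := by
  simp [pd5, fderiv_apply]

noncomputable def proj45L : (Fin 5 → ℝ) →L[ℝ] Fin 4 → ℝ :=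
  ContinuousLinearMap.pi fun i => ContinuousLinearMap.proj i.castSucc

lemma coe_proj45L : ⇑proj45L = proj45 := rfl

@[fun_prop]
lemma differentiable_proj45 : Differentiable ℝ proj45 :=
  coe_proj45L ▸ proj45L.differentiable

lemma proj45_single_castSucc (i : Fin 4) :
    proj45 (Pi.single i.castSucc 1) = Pi.single i 1 := by
  ext j
  simp [proj45, Pi.single_apply]

lemma proj45_single_last : proj45 (Pi.single 4 1) = 0 := by
  ext j
  simpa [proj45, Pi.single_apply] using (Fin.castSucc_lt_last j).ne

lemma proj45_snoc (s : Fin 4 → ℝ) (p : ℝ) : proj45 (Fin.snoc s p) = s := by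
  ext j
  simp [proj45]

lemma forall_proj45_iff {P : (Fin 4 → ℝ) → ℝ → Prop} :
    (∀ r, P (proj45 r) (r 4)) ↔ ∀ s p, P s p := by
  refine ⟨fun h s p => ?_, fun h r => h _ _⟩
  have : P (proj45 (Fin.snoc s p)) (Fin.snoc (α := fun _ => ℝ) s p (Fin.last 4)) := h _
  rwa [proj45_snoc, Fin.snoc_last] at this

section Lift

variable {h : (Fin 4 → ℝ) → ℝ} {r : Fin 5 → ℝ}

lemma HasFDerivAt.comp_proj45 {h' : (Fin 4 → ℝ) →L[ℝ] ℝ}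
    (hh : HasFDerivAt h h' (proj45 r)) :
    HasFDerivAt (fun r => h (proj45 r)) (h'.comp proj45L) r :=
  hh.comp r proj45L.hasFDerivAt

lemma pd5_comp_proj45 (hh : DifferentiableAt ℝ h (proj45 r)) (i : Fin 5) :
    pd5 i (fun r => h (proj45 r)) r = fderiv ℝ h (proj45 r) (proj45 (Pi.single i 1)) := by
  rw [pd5, hh.hasFDerivAt.comp_proj45.fderiv]
  rfl

lemma pd5_castSucc_comp_proj45 (hh : DifferentiableAt ℝ h (proj45 r)) (i : Fin 4) :
    pd5 i.castSucc (fun r => h (proj45 r)) r = pd4 i h (proj45 r) := by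
  rw [pd5_comp_proj45 hh, proj45_single_castSucc, pd4]

lemma pd5_last_comp_proj45 (hh : DifferentiableAt ℝ h (proj45 r)) :
    pd5 4 (fun r => h (proj45 r)) r = 0 := by
  rw [pd5_comp_proj45 hh, proj45_single_last, map_zero]

end Lift

def laxF (w u : (Fin 4 → ℝ) → ℝ) : (Fin 5 → ℝ) → ℝ := fun r =>
  r 4 ^ 2 + w (proj45 r) * r 4 + u (proj45 r)

def laxG (w q v : (Fin 4 → ℝ) → ℝ) : (Fin 5 → ℝ) → ℝ := fun r =>
  r 4 ^ 3 + 2 * w (proj45 r) * r 4 ^ 2 + q (proj45 r) * r 4 + v (proj45 r)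

section LaxPair

variable {u v w q : (Fin 4 → ℝ) → ℝ} {r : Fin 5 → ℝ}

lemma pd5_castSucc_laxF (hw : Differentiable ℝ w) (hu : Differentiable ℝ u) (i : Fin 4) :
    pd5 i.castSucc (laxF w u) r = pd4 i w (proj45 r) * r 4 + pd4 i u (proj45 r) := by
  unfold laxF
  simp (disch := fun_prop) only [pd5_add, pd5_mul, pd5_pow, pd5_castSucc_last_coord,
    pd5_castSucc_comp_proj45]
  ring

lemma pd5_last_laxF (hw : Differentiable ℝ w) (hu : Differentiable ℝ u) :
    pd5 4 (laxF w u) r = 2 * r 4 + w (proj45 r) := by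
  unfold laxF
  simp (disch := fun_prop) only [pd5_add, pd5_mul, pd5_pow, pd5_last_coord, pd5_last_comp_proj45]
  ring

lemma pd5_castSucc_laxG (hw : Differentiable ℝ w) (hq : Differentiable ℝ q)
    (hv : Differentiable ℝ v) (i : Fin 4) :
    pd5 i.castSucc (laxG w q v) r =
      2 * pd4 i w (proj45 r) * r 4 ^ 2 + pd4 i q (proj45 r) * r 4 + pd4 i v (proj45 r) := by
  unfold laxG
  simp (disch := fun_prop) only [pd5_add, pd5_mul, pd5_pow, pd5_const, pd5_castSucc_last_coord,
    pd5_castSucc_comp_proj45]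
  ring

lemma pd5_last_laxG (hw : Differentiable ℝ w) (hq : Differentiable ℝ q)
    (hv : Differentiable ℝ v) :
    pd5 4 (laxG w q v) r = 3 * r 4 ^ 2 + 4 * w (proj45 r) * r 4 + q (proj45 r) := by
  unfold laxG
  simp (disch := fun_prop) only [pd5_add, pd5_mul, pd5_pow, pd5_const, pd5_last_coord,
    pd5_last_comp_proj45]
  ring

/-- Coefficients of `p⁰, p¹, p², p³` in `∂_t f − ∂_y g + {f, g}_L`: the left-hand sides of
equations (i), (iv), (iii), (ii). -/
noncomputable def zeroCurvatureCoeff (u v w q : (Fin 4 → ℝ) → ℝ) (s : Fin 4 → ℝ) :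
    Fin 4 → ℝ :=
  ![pd4 3 u s - v s * pd4 2 u s - q s * pd4 0 u s
      + u s * pd4 2 v s + w s * pd4 0 v s - pd4 1 v s,
    pd4 3 w s - pd4 1 q s + 2 * pd4 0 v s - 4 * w s * pd4 0 u s
      + w s * pd4 0 q s - q s * pd4 0 w s - v s * pd4 2 w s + u s * pd4 2 q s,
    2 * pd4 0 q s - 3 * pd4 0 u s - 2 * pd4 1 w s + 2 * w s * pd4 2 u s
      - pd4 2 v s - 2 * w s * pd4 0 w s + 2 * u s * pd4 2 w s,
    2 * pd4 2 u s + pd4 0 w s + 2 * w s * pd4 2 w s - pd4 2 q s]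

lemma zeroCurvature_laxF_laxG_eq_sum (hu : Differentiable ℝ u) (hv : Differentiable ℝ v)
    (hw : Differentiable ℝ w) (hq : Differentiable ℝ q) :
    pd5 3 (laxF w u) r - pd5 1 (laxG w q v) r + cbr5 (laxF w u) (laxG w q v) r =
      ∑ k : Fin 4, zeroCurvatureCoeff u v w q (proj45 r) k * r 4 ^ (k : ℕ) := by
  have f_x : pd5 0 (laxF w u) r = _ := pd5_castSucc_laxF hw hu 0
  have f_z : pd5 2 (laxF w u) r = _ := pd5_castSucc_laxF hw hu 2
  have f_t : pd5 3 (laxF w u) r = _ := pd5_castSucc_laxF hw hu 3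
  have g_x : pd5 0 (laxG w q v) r = _ := pd5_castSucc_laxG hw hq hv 0
  have g_y : pd5 1 (laxG w q v) r = _ := pd5_castSucc_laxG hw hq hv 1
  have g_z : pd5 2 (laxG w q v) r = _ := pd5_castSucc_laxG hw hq hv 2
  rw [cbr5, f_x, f_z, f_t, g_x, g_y, g_z, pd5_last_laxF hw hu, pd5_last_laxG hw hq hv]
  simp only [laxF, laxG, zeroCurvatureCoeff, Fin.sum_univ_four, Matrix.cons_val_zero,
    Matrix.cons_val_one, Matrix.cons_val, Fin.coe_ofNat_eq_mod, Nat.reduceMod, pow_zero, pow_one,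
    mul_one]
  ring

end LaxPair

/-- Example 1: for C¹ functions `u, v, w, q : ℝ⁴ → ℝ` of `(x,y,z,t)` and
`f = p² + w p + u`, `g = p³ + 2w p² + q p + v`, the zero-curvature-type equation
`∂_t f − ∂_y g + {f,g}_L = 0` holds for all `(x,y,z,t,p) ∈ ℝ⁵` iff the four-component
system (4ddkp) holds at every `(x,y,z,t)`. -/
theorem example1_zero_curvature_iff_system (u v w q : (Fin 4 → ℝ) → ℝ)
    (hu : ContDiff ℝ 1 u) (hv : ContDiff ℝ 1 v)
    (hw : ContDiff ℝ 1 w) (hq : ContDiff ℝ 1 q)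
    (f g : (Fin 5 → ℝ) → ℝ)
    (hf : f = fun r => (r 4) ^ 2 + w (proj45 r) * r 4 + u (proj45 r))
    (hg : g = fun r =>
      (r 4) ^ 3 + 2 * w (proj45 r) * (r 4) ^ 2 + q (proj45 r) * r 4 + v (proj45 r)) :
    (∀ r : Fin 5 → ℝ, pd5 3 f r - pd5 1 g r + cbr5 f g r = 0) ↔
    (∀ s : Fin 4 → ℝ,
      (pd4 3 u s - v s * pd4 2 u s - q s * pd4 0 u s
          + u s * pd4 2 v s + w s * pd4 0 v s - pd4 1 v s = 0) ∧
      (2 * pd4 2 u s + pd4 0 w s + 2 * w s * pd4 2 w s - pd4 2 q s = 0) ∧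
      (2 * pd4 0 q s - 3 * pd4 0 u s - 2 * pd4 1 w s + 2 * w s * pd4 2 u s
          - pd4 2 v s - 2 * w s * pd4 0 w s + 2 * u s * pd4 2 w s = 0) ∧
      (pd4 3 w s - pd4 1 q s + 2 * pd4 0 v s - 4 * w s * pd4 0 u s
          + w s * pd4 0 q s - q s * pd4 0 w s - v s * pd4 2 w s + u s * pd4 2 q s = 0)) := by
  rw [show f = laxF w u from hf, show g = laxG w q v from hg]
  simp only [zeroCurvature_laxF_laxG_eq_sum (hu.differentiable one_ne_zero)
    (hv.differentiable one_ne_zero) (hw.differentiable one_ne_zero) (hq.differentiable one_ne_zero)]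
  refine (forall_proj45_iff
    (P := fun s p => ∑ k, zeroCurvatureCoeff u v w q s k * p ^ (k : ℕ) = 0)).trans ?_
  refine forall_congr' fun s => ?_
  simp only [forall_sum_mul_pow_eq_zero_iff, zeroCurvatureCoeff, Matrix.cons_eq_zero_iff,
    Matrix.zero_empty, and_true]
  tauto
end

section
/- Reduction of the four-component system to the dispersionless KP system: let u, v : ℝ³ → ℝ be continuously differentiable functions of (x, y, t), regarded as z-independent functions on ℝ⁴, and set w = 0 and q = (3/2)·u. Then the four equations (i) u_t − v·u_z − q·u_x + u·v_z + w·v_x − v_y = 0; (ii) 2u_z + w_x + 2w·w_z − q_z = 0; (iii) 2q_x − 3u_x − 2w_y + 2w·u_z − v_z − 2w·w_x + 2u·w_z = 0; (iv) w_t − q_y + 2v_x − 4w·u_x + w·q_x − q·w_x − v·w_z + u·q_z = 0 hold at every point if and only if 4v_x = 3u_y and 2u_t = 3u·u_x + 2v_y hold at every point. -/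
/-!
Since `U` and `V` do not depend on `z`, `W = 0` and `Q = (3/2) U`, every `z`-derivative and
every derivative of `W` vanishes. Equations (ii) and (iii) then hold identically, (i) becomes
`2 u_t = 3 u u_x + 2 v_y` and (iv) becomes `4 v_x = 3 u_y`, evaluated at the projection of the
point to `(x, y, t)`; this projection is onto, so "at every point" means the same on both sides.
-/

/-- No differentiability is needed: `f` is recovered from `f ∘ L` through the affine section
`y ↦ x + σ (y - L x)`, so `f ∘ L` is differentiable at `x` exactly when `f` is at `L x`, and
otherwise both sides are `0`. -/
theorem fderiv_comp_of_rightInverse {𝕜 E F G : Type*} [NontriviallyNormedField 𝕜]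
    [NormedAddCommGroup E] [NormedSpace 𝕜 E] [NormedAddCommGroup F] [NormedSpace 𝕜 F]
    [NormedAddCommGroup G] [NormedSpace 𝕜 G]
    (L : E →L[𝕜] F) (σ : F →L[𝕜] E) (hσ : Function.RightInverse σ L) (f : F → G)
    (x : E) :
    fderiv 𝕜 (fun x => f (L x)) x = (fderiv 𝕜 f (L x)).comp L := by
  by_cases hf : DifferentiableAt 𝕜 f (L x)
  · rw [fderiv_fun_comp x hf L.differentiableAt, L.fderiv]
  · have hfL : ¬ DifferentiableAt 𝕜 (fun y => f (L y)) x := by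
      intro hfL
      have hf_eq : f = (fun y => f (L y)) ∘ fun y => x + σ (y - L x) := by
        funext y; simp [show ∀ y, L (σ y) = y from hσ]
      apply hf
      rw [hf_eq]
      exact DifferentiableAt.comp (L x) (by simpa using hfL) (by fun_prop)
    rw [fderiv_zero_of_not_differentiableAt hf, fderiv_zero_of_not_differentiableAt hfL,
      ContinuousLinearMap.zero_comp]

def dropZ : (Fin 4 → ℝ) →L[ℝ] (Fin 3 → ℝ) where
  toFun s := ![s 0, s 1, s 3]
  map_add' s s' := by ext i; fin_cases i <;> rfl
  map_smul' c s := by ext i; fin_cases i <;> rfl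
  cont := by fun_prop

def liftZ : (Fin 3 → ℝ) →L[ℝ] (Fin 4 → ℝ) where
  toFun q := ![q 0, q 1, 0, q 2]
  map_add' q q' := by ext i; fin_cases i <;> simp
  map_smul' c q := by ext i; fin_cases i <;> simp
  cont := by fun_prop

theorem dropZ_liftZ : Function.RightInverse liftZ dropZ := by
  intro q; ext i; fin_cases i <;> rfl

section DropZ

variable (f : (Fin 3 → ℝ) → ℝ) (s : Fin 4 → ℝ)

theorem pd4_comp_dropZ (i : Fin 4) :
    pd4 i (fun s => f (dropZ s)) s = fderiv ℝ f (dropZ s) (dropZ (Pi.single i 1)) := by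
  rw [pd4, fderiv_comp_of_rightInverse dropZ liftZ dropZ_liftZ]
  rfl

theorem pd4_x_comp_dropZ :
    pd4 0 (fun s => f (dropZ s)) s = pd3 0 f (dropZ s) := by
  rw [pd4_comp_dropZ, pd3]; congr 1; ext j; fin_cases j <;> simp [dropZ]

theorem pd4_y_comp_dropZ :
    pd4 1 (fun s => f (dropZ s)) s = pd3 1 f (dropZ s) := by
  rw [pd4_comp_dropZ, pd3]; congr 1; ext j; fin_cases j <;> simp [dropZ]

theorem pd4_z_comp_dropZ :
    pd4 2 (fun s => f (dropZ s)) s = 0 := by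
  rw [pd4_comp_dropZ, ← map_zero (fderiv ℝ f (dropZ s))]
  congr 1; ext j; fin_cases j <;> simp [dropZ]

theorem pd4_t_comp_dropZ :
    pd4 3 (fun s => f (dropZ s)) s = pd3 2 f (dropZ s) := by
  rw [pd4_comp_dropZ, pd3]; congr 1; ext j; fin_cases j <;> simp [dropZ]

end DropZ

theorem pd4_const (i : Fin 4) (c : ℝ) (s : Fin 4 → ℝ) : pd4 i (fun _ => c) s = 0 := by
  simp [pd4]

theorem pd4_const_mul (i : Fin 4) (c : ℝ) (h : (Fin 4 → ℝ) → ℝ) (s : Fin 4 → ℝ) :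
    pd4 i (fun s => c * h s) s = c * pd4 i h s := by
  simp only [pd4, ← smul_eq_mul, ← Pi.smul_def, fderiv_const_smul_field]
  rfl

theorem reduction_to_dkp_system_general (u v : (Fin 3 → ℝ) → ℝ)
    (U V W Q : (Fin 4 → ℝ) → ℝ)
    (hU : U = fun s => u ![s 0, s 1, s 3])
    (hV : V = fun s => v ![s 0, s 1, s 3])
    (hW : W = fun _ => 0)
    (hQ : Q = fun s => (3 / 2 : ℝ) * U s) :
    (∀ s : Fin 4 → ℝ,
      (pd4 3 U s - V s * pd4 2 U s - Q s * pd4 0 U s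
          + U s * pd4 2 V s + W s * pd4 0 V s - pd4 1 V s = 0) ∧
      (2 * pd4 2 U s + pd4 0 W s + 2 * W s * pd4 2 W s - pd4 2 Q s = 0) ∧
      (2 * pd4 0 Q s - 3 * pd4 0 U s - 2 * pd4 1 W s + 2 * W s * pd4 2 U s
          - pd4 2 V s - 2 * W s * pd4 0 W s + 2 * U s * pd4 2 W s = 0) ∧
      (pd4 3 W s - pd4 1 Q s + 2 * pd4 0 V s - 4 * W s * pd4 0 U s
          + W s * pd4 0 Q s - Q s * pd4 0 W s - V s * pd4 2 W s + U s * pd4 2 Q s = 0)) ↔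
    (∀ q : Fin 3 → ℝ,
      4 * pd3 0 v q = 3 * pd3 1 u q ∧
      2 * pd3 2 u q = 3 * u q * pd3 0 u q + 2 * pd3 1 v q) := by
  obtain rfl : U = fun s => u (dropZ s) := hU
  obtain rfl : V = fun s => v (dropZ s) := hV
  subst hW hQ
  simp only [pd4_const, pd4_const_mul, pd4_x_comp_dropZ, pd4_y_comp_dropZ, pd4_z_comp_dropZ,
    pd4_t_comp_dropZ]
  refine Iff.trans ?_ dropZ_liftZ.surjective.forall.symm
  refine forall_congr' fun s => ?_
  constructor
  · rintro ⟨h_i, -, -, h_iv⟩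
    constructor <;> linarith
  · rintro ⟨h_vx, h_ut⟩
    refine ⟨by linarith, by ring, by ring, by linarith⟩

/-- Reduction of the four-component system to the dispersionless KP system:
for C¹ `u, v : ℝ³ → ℝ` of `(x,y,t)`, regarded as z-independent functions `U, V` on ℝ⁴,
and with `W = 0`, `Q = (3/2) U`, the four equations (i)–(iv) of the four-component system
hold at every point of ℝ⁴ iff `4 v_x = 3 u_y` and `2 u_t = 3 u u_x + 2 v_y` hold at every
point of ℝ³. -/
theorem reduction_to_dkp_system (u v : (Fin 3 → ℝ) → ℝ)
    (hu : ContDiff ℝ 1 u) (hv : ContDiff ℝ 1 v)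
    (U V W Q : (Fin 4 → ℝ) → ℝ)
    (hU : U = fun s => u ![s 0, s 1, s 3])
    (hV : V = fun s => v ![s 0, s 1, s 3])
    (hW : W = fun _ => 0)
    (hQ : Q = fun s => (3 / 2 : ℝ) * U s) :
    (∀ s : Fin 4 → ℝ,
      (pd4 3 U s - V s * pd4 2 U s - Q s * pd4 0 U s
          + U s * pd4 2 V s + W s * pd4 0 V s - pd4 1 V s = 0) ∧
      (2 * pd4 2 U s + pd4 0 W s + 2 * W s * pd4 2 W s - pd4 2 Q s = 0) ∧
      (2 * pd4 0 Q s - 3 * pd4 0 U s - 2 * pd4 1 W s + 2 * W s * pd4 2 U s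
          - pd4 2 V s - 2 * W s * pd4 0 W s + 2 * U s * pd4 2 W s = 0) ∧
      (pd4 3 W s - pd4 1 Q s + 2 * pd4 0 V s - 4 * W s * pd4 0 U s
          + W s * pd4 0 Q s - Q s * pd4 0 W s - V s * pd4 2 W s + U s * pd4 2 Q s = 0)) ↔
    (∀ q : Fin 3 → ℝ,
      4 * pd3 0 v q = 3 * pd3 1 u q ∧
      2 * pd3 2 u q = 3 * u q * pd3 0 u q + 2 * pd3 1 v q) :=
  reduction_to_dkp_system_general u v U V W Q hU hV hW hQ
end

section
/- Weak zero-curvature equation from two compatible contact Lax flows: let f, g, h : ℝ⁵ → ℝ be smooth functions of (x, y, z, t, p), with all contact brackets taken in the variables (x, z, p). If f satisfies ∂_t f = {g, f}_L and ∂_y f = {h, f}_L at every point, then {∂_t h − ∂_y g + {h, g}_L, f}_L = 0 at every point of ℝ⁵. -/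
noncomputable def pdd (φ : (Fin 5 → ℝ) → ℝ) (r : Fin 5 → ℝ) (i j : Fin 5) : ℝ :=
  fderiv ℝ (fderiv ℝ φ) r (Pi.single i 1) (Pi.single j 1)

lemma contDiff_pd5 {φ : (Fin 5 → ℝ) → ℝ} (hφ : ContDiff ℝ (⊤ : ℕ∞) φ) (i : Fin 5) :
    ContDiff ℝ (⊤ : ℕ∞) (pd5 i φ) := by
  have : ContDiff ℝ (⊤ : ℕ∞) (fderiv ℝ φ) := hφ.fderiv_right le_rfl
  exact this.clm_apply contDiff_const

lemma diff_pd5 {φ : (Fin 5 → ℝ) → ℝ} (hφ : ContDiff ℝ (⊤ : ℕ∞) φ) (i : Fin 5) (r : Fin 5 → ℝ) :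
    DifferentiableAt ℝ (pd5 i φ) r :=
  ((contDiff_pd5 hφ i).differentiable (by simp)) r

lemma pd5_pd5 {φ : (Fin 5 → ℝ) → ℝ} (hφ : ContDiff ℝ (⊤ : ℕ∞) φ) (i j : Fin 5) (r : Fin 5 → ℝ) :
    pd5 i (pd5 j φ) r = pdd φ r i j := by
  have hc : DifferentiableAt ℝ (fderiv ℝ φ) r :=
    ((hφ.fderiv_right (m := (⊤ : ℕ∞)) le_rfl).differentiable (by simp)) r
  have e : pd5 i (pd5 j φ) r
      = fderiv ℝ (fun s => (fderiv ℝ φ s) (Pi.single j (1:ℝ))) r (Pi.single i 1) := rfl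
  rw [e, fderiv_clm_apply hc (differentiableAt_const _)]
  simp [pdd]

lemma pdd_symm {φ : (Fin 5 → ℝ) → ℝ} (hφ : ContDiff ℝ (⊤ : ℕ∞) φ) (r : Fin 5 → ℝ) (i j : Fin 5) :
    pdd φ r i j = pdd φ r j i := by
  apply second_derivative_symmetric (f := φ) (f' := fderiv ℝ φ)
  · exact fun y => ((hφ.differentiable (by simp)) y).hasFDerivAt
  · exact (((hφ.fderiv_right (m := (⊤ : ℕ∞)) le_rfl).differentiable (by simp)) r).hasFDerivAt

lemma pd5_mul_s13 {a b : (Fin 5 → ℝ) → ℝ} (ha : DifferentiableAt ℝ a r) (hb : DifferentiableAt ℝ b r)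
    (i : Fin 5) : pd5 i (fun s => a s * b s) r = pd5 i a r * b r + a r * pd5 i b r := by
  rw [pd5, fderiv_fun_mul ha hb]; simp [pd5]; ring

example : True := trivial

lemma pd5_add_s13 {a b : (Fin 5 → ℝ) → ℝ} {r : Fin 5 → ℝ} (ha : DifferentiableAt ℝ a r)
    (hb : DifferentiableAt ℝ b r) (i : Fin 5) :
    pd5 i (fun s => a s + b s) r = pd5 i a r + pd5 i b r := by
  rw [pd5, fderiv_fun_add ha hb]; simp [pd5]

lemma pd5_sub {a b : (Fin 5 → ℝ) → ℝ} {r : Fin 5 → ℝ} (ha : DifferentiableAt ℝ a r)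
    (hb : DifferentiableAt ℝ b r) (i : Fin 5) :
    pd5 i (fun s => a s - b s) r = pd5 i a r - pd5 i b r := by
  rw [pd5, fderiv_fun_sub ha hb]; simp [pd5]

lemma pd5_coord (i j : Fin 5) (r : Fin 5 → ℝ) :
    pd5 i (fun s => s j) r = (Pi.single i 1 : Fin 5 → ℝ) j := by
  have e : (fun s : Fin 5 → ℝ => s j)
      = (ContinuousLinearMap.proj j : (Fin 5 → ℝ) →L[ℝ] ℝ) := rfl
  rw [pd5, e, ContinuousLinearMap.fderiv]; rfl

lemma diff_coord (j : Fin 5) (r : Fin 5 → ℝ) :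
    DifferentiableAt ℝ (fun s : Fin 5 → ℝ => s j) r := by
  have e : (fun s : Fin 5 → ℝ => s j)
      = (ContinuousLinearMap.proj j : (Fin 5 → ℝ) →L[ℝ] ℝ) := rfl
  rw [e]
  exact (ContinuousLinearMap.proj j : (Fin 5 → ℝ) →L[ℝ] ℝ).differentiableAt

lemma pd5_cbr5 {a b : (Fin 5 → ℝ) → ℝ} (ha : ContDiff ℝ (⊤ : ℕ∞) a) (hb : ContDiff ℝ (⊤ : ℕ∞) b)
    (i : Fin 5) (r : Fin 5 → ℝ) :
    pd5 i (cbr5 a b) r =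
      (pdd a r i 4 * pd5 0 b r + pd5 4 a r * pdd b r i 0)
      - (pdd b r i 4 * pd5 0 a r + pd5 4 b r * pdd a r i 0)
      - ((Pi.single i 1 : Fin 5 → ℝ) 4 * (pd5 4 a r * pd5 2 b r - pd5 4 b r * pd5 2 a r)
         + r 4 * ((pdd a r i 4 * pd5 2 b r + pd5 4 a r * pdd b r i 2)
                  - (pdd b r i 4 * pd5 2 a r + pd5 4 b r * pdd a r i 2)))
      + (pd5 i a r * pd5 2 b r + a r * pdd b r i 2)
      - (pd5 i b r * pd5 2 a r + b r * pdd a r i 2) := by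
  have daa : DifferentiableAt ℝ a r := (ha.differentiable (by simp)) r
  have dbb : DifferentiableAt ℝ b r := (hb.differentiable (by simp)) r
  have da0 := diff_pd5 ha 0 r; have da2 := diff_pd5 ha 2 r; have da4 := diff_pd5 ha 4 r
  have db0 := diff_pd5 hb 0 r; have db2 := diff_pd5 hb 2 r; have db4 := diff_pd5 hb 4 r
  have dx4 := diff_coord 4 r
  have d1 : DifferentiableAt ℝ (fun s => pd5 4 a s * pd5 0 b s) r := da4.mul db0
  have d2 : DifferentiableAt ℝ (fun s => pd5 4 b s * pd5 0 a s) r := db4.mul da0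
  have dI : DifferentiableAt ℝ (fun s => pd5 4 a s * pd5 2 b s - pd5 4 b s * pd5 2 a s) r :=
    (da4.mul db2).sub (db4.mul da2)
  have d3 : DifferentiableAt ℝ
      (fun s => s 4 * (pd5 4 a s * pd5 2 b s - pd5 4 b s * pd5 2 a s)) r := dx4.mul dI
  have d4 : DifferentiableAt ℝ (fun s => a s * pd5 2 b s) r := daa.mul db2
  have d5 : DifferentiableAt ℝ (fun s => b s * pd5 2 a s) r := dbb.mul da2
  have e : cbr5 a b = fun s =>
      pd5 4 a s * pd5 0 b s - pd5 4 b s * pd5 0 a s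
      - s 4 * (pd5 4 a s * pd5 2 b s - pd5 4 b s * pd5 2 a s)
      + a s * pd5 2 b s - b s * pd5 2 a s := rfl
  rw [e, pd5_sub (((d1.fun_sub d2).fun_sub d3).fun_add d4) d5,
      pd5_add_s13 ((d1.fun_sub d2).fun_sub d3) d4,
      pd5_sub (d1.fun_sub d2) d3,
      pd5_sub d1 d2,
      pd5_mul_s13 da4 db0, pd5_mul_s13 db4 da0,
      pd5_mul_s13 dx4 dI,
      pd5_sub (da4.fun_mul db2) (db4.fun_mul da2),
      pd5_mul_s13 da4 db2, pd5_mul_s13 db4 da2,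
      pd5_mul_s13 daa db2, pd5_mul_s13 dbb da2,
      pd5_coord,
      pd5_pd5 ha, pd5_pd5 ha, pd5_pd5 ha, pd5_pd5 hb, pd5_pd5 hb, pd5_pd5 hb]

lemma contDiff_cbr5 {a b : (Fin 5 → ℝ) → ℝ} (ha : ContDiff ℝ (⊤ : ℕ∞) a) (hb : ContDiff ℝ (⊤ : ℕ∞) b) :
    ContDiff ℝ (⊤ : ℕ∞) (cbr5 a b) := by
  have e : cbr5 a b = fun s =>
      pd5 4 a s * pd5 0 b s - pd5 4 b s * pd5 0 a s
      - s 4 * (pd5 4 a s * pd5 2 b s - pd5 4 b s * pd5 2 a s)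
      + a s * pd5 2 b s - b s * pd5 2 a s := rfl
  have hx : ContDiff ℝ (⊤ : ℕ∞) (fun s : Fin 5 → ℝ => s 4) := by
    have e2 : (fun s : Fin 5 → ℝ => s 4)
        = (ContinuousLinearMap.proj 4 : (Fin 5 → ℝ) →L[ℝ] ℝ) := rfl
    rw [e2]
    exact (ContinuousLinearMap.proj 4 : (Fin 5 → ℝ) →L[ℝ] ℝ).contDiff
  rw [e]
  exact (((((contDiff_pd5 ha 4).mul (contDiff_pd5 hb 0)).sub
    ((contDiff_pd5 hb 4).mul (contDiff_pd5 ha 0))).sub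
    (hx.mul (((contDiff_pd5 ha 4).mul (contDiff_pd5 hb 2)).sub
      ((contDiff_pd5 hb 4).mul (contDiff_pd5 ha 2))))).add
    (ha.mul (contDiff_pd5 hb 2))).sub (hb.mul (contDiff_pd5 ha 2))


/-- Weak zero-curvature equation from two compatible contact Lax flows:
for smooth `f, g, h : ℝ⁵ → ℝ` of `(x,y,z,t,p)` (brackets in the variables `(x,z,p)`),
if `∂_t f = {g, f}_L` and `∂_y f = {h, f}_L` everywhere, then
`{∂_t h − ∂_y g + {h, g}_L, f}_L = 0` at every point of ℝ⁵. -/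
theorem weak_zero_curvature_from_compatible_flows (f g h : (Fin 5 → ℝ) → ℝ)
    (hf : ContDiff ℝ (⊤ : ℕ∞) f) (hg : ContDiff ℝ (⊤ : ℕ∞) g) (hh : ContDiff ℝ (⊤ : ℕ∞) h)
    (hft : ∀ r : Fin 5 → ℝ, pd5 3 f r = cbr5 g f r)
    (hfy : ∀ r : Fin 5 → ℝ, pd5 1 f r = cbr5 h f r)
    (r : Fin 5 → ℝ) :
    cbr5 (fun s => pd5 3 h s - pd5 1 g s + cbr5 h g s) f r = 0 := by
  have e1 : pd5 1 f = cbr5 h f := funext hfy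
  have e2 : pd5 3 f = cbr5 g f := funext hft
  have ps0 : (Pi.single (0:Fin 5) 1 : Fin 5 → ℝ) 4 = 0 := by simp
  have ps1 : (Pi.single (1:Fin 5) 1 : Fin 5 → ℝ) 4 = 0 := by simp
  have ps2 : (Pi.single (2:Fin 5) 1 : Fin 5 → ℝ) 4 = 0 := by simp
  have ps3 : (Pi.single (3:Fin 5) 1 : Fin 5 → ℝ) 4 = 0 := by simp
  have ps4 : (Pi.single (4:Fin 5) 1 : Fin 5 → ℝ) 4 = 1 := by simp
  have key : pd5 3 (cbr5 h f) r = pd5 1 (cbr5 g f) r := by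
    rw [← e1, ← e2, pd5_pd5 hf, pd5_pd5 hf, pdd_symm hf r 3 1]
  have E03 : pdd f r 0 3 = pd5 0 (cbr5 g f) r := by rw [← pd5_pd5 hf 0 3 r, e2]
  have E23 : pdd f r 2 3 = pd5 2 (cbr5 g f) r := by rw [← pd5_pd5 hf 2 3 r, e2]
  have E34 : pdd f r 3 4 = pd5 4 (cbr5 g f) r := by
    rw [pdd_symm hf r 3 4, ← pd5_pd5 hf 4 3 r, e2]
  have E01 : pdd f r 0 1 = pd5 0 (cbr5 h f) r := by rw [← pd5_pd5 hf 0 1 r, e1]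
  have E12 : pdd f r 1 2 = pd5 2 (cbr5 h f) r := by
    rw [pdd_symm hf r 1 2, ← pd5_pd5 hf 2 1 r, e1]
  have E14 : pdd f r 1 4 = pd5 4 (cbr5 h f) r := by
    rw [pdd_symm hf r 1 4, ← pd5_pd5 hf 4 1 r, e1]
  simp only [pd5_cbr5 hh hf, pd5_cbr5 hg hf,
    pdd_symm hf r 1 0, pdd_symm hf r 2 0, pdd_symm hf r 2 1, pdd_symm hf r 3 0,
    pdd_symm hf r 3 1, pdd_symm hf r 3 2, pdd_symm hf r 4 0, pdd_symm hf r 4 1,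
    pdd_symm hf r 4 2, pdd_symm hf r 4 3,
    pdd_symm hg r 1 0, pdd_symm hg r 2 0, pdd_symm hg r 2 1, pdd_symm hg r 3 0,
    pdd_symm hg r 3 1, pdd_symm hg r 3 2, pdd_symm hg r 4 0, pdd_symm hg r 4 1,
    pdd_symm hg r 4 2, pdd_symm hg r 4 3,
    pdd_symm hh r 1 0, pdd_symm hh r 2 0, pdd_symm hh r 2 1, pdd_symm hh r 3 0,
    pdd_symm hh r 3 1, pdd_symm hh r 3 2, pdd_symm hh r 4 0, pdd_symm hh r 4 1,
    pdd_symm hh r 4 2, pdd_symm hh r 4 3,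
    E03, E23, E34, E01, E12, E14, hft r, hfy r, ps0, ps1, ps2, ps3, ps4, cbr5] at key
  -- expand the goal
  have dA : DifferentiableAt ℝ (cbr5 h g) r := ((contDiff_cbr5 hh hg).differentiable (by simp)) r
  have EA : ∀ i : Fin 5, pd5 i (fun s => pd5 3 h s - pd5 1 g s + cbr5 h g s) r
      = pdd h r i 3 - pdd g r i 1 + pd5 i (cbr5 h g) r := by
    intro i
    rw [pd5_add_s13 ((diff_pd5 hh 3 r).fun_sub (diff_pd5 hg 1 r)) dA,
      pd5_sub (diff_pd5 hh 3 r) (diff_pd5 hg 1 r), pd5_pd5 hh, pd5_pd5 hg]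
  rw [show cbr5 (fun s => pd5 3 h s - pd5 1 g s + cbr5 h g s) f r
      = pd5 4 (fun s => pd5 3 h s - pd5 1 g s + cbr5 h g s) r * pd5 0 f r
        - pd5 4 f r * pd5 0 (fun s => pd5 3 h s - pd5 1 g s + cbr5 h g s) r
        - r 4 * (pd5 4 (fun s => pd5 3 h s - pd5 1 g s + cbr5 h g s) r * pd5 2 f r
          - pd5 4 f r * pd5 2 (fun s => pd5 3 h s - pd5 1 g s + cbr5 h g s) r)
        + (pd5 3 h r - pd5 1 g r + cbr5 h g r) * pd5 2 f r
        - f r * pd5 2 (fun s => pd5 3 h s - pd5 1 g s + cbr5 h g s) r from rfl,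
    EA 0, EA 2, EA 4]
  simp only [pd5_cbr5 hh hg,
    pdd_symm hg r 1 0, pdd_symm hg r 2 0, pdd_symm hg r 2 1, pdd_symm hg r 3 0,
    pdd_symm hg r 3 1, pdd_symm hg r 3 2, pdd_symm hg r 4 0, pdd_symm hg r 4 1,
    pdd_symm hg r 4 2, pdd_symm hg r 4 3,
    pdd_symm hh r 1 0, pdd_symm hh r 2 0, pdd_symm hh r 2 1, pdd_symm hh r 3 0,
    pdd_symm hh r 3 1, pdd_symm hh r 3 2, pdd_symm hh r 4 0, pdd_symm hh r 4 1,
    pdd_symm hh r 4 2, pdd_symm hh r 4 3,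
    ps0, ps1, ps2, ps3, ps4, cbr5]
  linear_combination key
end
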